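/- arXiv:1307.5767 — 3 statements merged into one kernel-verified Lean document; each statement's English description precedes it below -/
import Mathlib

section
/- Let f : [a,b] → [c,d] be an integrable function and let y = (1/(b−a)) ∫_a^b f(x) dx be its mean value. Then ∫_a^b |f(x) − y| dx ≤ (b−a)(d−c)/2. -/
open MeasureTheory Set

/-! The convex function `t ↦ |t - y|` lies below its chord over `[c, d]`, and the chord is affine in
`t`, so integrating it against a measure whose mean of `f` is `y` gives
`(d - c) ∫ |f - y| ≤ 2 m (d - y)(y - c) ≤ m (d - c)² / 2`, where `m` is the total mass. -/

theorem abs_sub_mul_sub_le_of_mem_Icc {c d t y : ℝ} (ht : t ∈ Icc c d) (hy : y ∈ Icc c d) :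
    |t - y| * (d - c) ≤ (d - t) * (y - c) + (t - c) * (d - y) := by
  obtain ⟨htc, htd⟩ := ht
  obtain ⟨hyc, hyd⟩ := hy
  rcases le_total y t with hyt | hty
  · rw [abs_of_nonneg (sub_nonneg.2 hyt)]
    nlinarith [mul_nonneg (sub_nonneg.2 htd) (sub_nonneg.2 hyc)]
  · rw [abs_of_nonpos (sub_nonpos.2 hty)]
    nlinarith [mul_nonneg (sub_nonneg.2 htc) (sub_nonneg.2 hyd)]

theorem integral_abs_sub_average_le {α : Type*} [MeasurableSpace α] {μ : Measure α}
    [IsFiniteMeasure μ] [NeZero μ] {f : α → ℝ} {c d : ℝ} (hf : Integrable f μ)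
    (hfcd : ∀ᵐ x ∂μ, f x ∈ Icc c d) :
    ∫ x, |f x - ⨍ x, f x ∂μ| ∂μ ≤ μ.real univ * (d - c) / 2 := by
  set y := ⨍ x, f x ∂μ
  set m := μ.real univ
  have hy : y ∈ Icc c d := (convex_Icc c d).average_mem isClosed_Icc hfcd hf
  have hmean : ∫ x, f x ∂μ = m * y := (measure_smul_average μ f).symm
  have habs : Integrable (fun x ↦ |f x - y|) μ := (hf.sub (integrable_const y)).abs
  have hdf : Integrable (fun x ↦ d - f x) μ := (integrable_const d).sub hf
  have hfc : Integrable (fun x ↦ f x - c) μ := hf.sub (integrable_const c)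
  have hchord : (∫ x, |f x - y| ∂μ) * (d - c) ≤ 2 * m * ((d - y) * (y - c)) := calc
    (∫ x, |f x - y| ∂μ) * (d - c) = ∫ x, |f x - y| * (d - c) ∂μ := (integral_mul_const _ _).symm
    _ ≤ ∫ x, ((d - f x) * (y - c) + (f x - c) * (d - y)) ∂μ := by
      refine integral_mono_ae (habs.mul_const _) ((hdf.mul_const _).add (hfc.mul_const _)) ?_
      filter_upwards [hfcd] with x hx using abs_sub_mul_sub_le_of_mem_Icc hx hy
    _ = 2 * m * ((d - y) * (y - c)) := by
      rw [integral_add (hdf.mul_const _) (hfc.mul_const _), integral_mul_const, integral_mul_const,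
        integral_sub (integrable_const d) hf, integral_sub hf (integrable_const c),
        integral_const, integral_const, hmean, smul_eq_mul, smul_eq_mul]
      ring
  rcases (hy.1.trans hy.2).eq_or_lt with rfl | hcd
  · have hzero : ∀ᵐ x ∂μ, |f x - y| = 0 := by
      filter_upwards [hfcd] with x hx
      rw [abs_eq_zero, sub_eq_zero, le_antisymm hx.2 hx.1, le_antisymm hy.2 hy.1]
    simp [integral_eq_zero_of_ae hzero]
  · rw [← mul_le_mul_iff_of_pos_right (sub_pos.2 hcd)]
    calc (∫ x, |f x - y| ∂μ) * (d - c) ≤ 2 * m * ((d - y) * (y - c)) := hchord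
      _ ≤ 2 * m * ((d - c) / 2) ^ 2 := by gcongr; nlinarith [sq_nonneg (d + c - 2 * y)]
      _ = m * (d - c) / 2 * (d - c) := by ring

theorem stmt1_general (a b c d : ℝ) (hab : a < b) (f : ℝ → ℝ)
    (hf : IntegrableOn f (Set.Icc a b))
    (hrange : ∀ x ∈ Set.Icc a b, f x ∈ Set.Icc c d)
    (y : ℝ) (hy : y = (1 / (b - a)) * ∫ x in a..b, f x) :
    (∫ x in a..b, |f x - y|) ≤ (b - a) * (d - c) / 2 := by
  have hvol : volume.real (Ioc a b) = b - a := Real.volume_real_Ioc_of_le hab.le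
  have : NeZero (volume (Ioc a b)) := ⟨by simp [hab]⟩
  have hy' : y = ⨍ x in Ioc a b, f x := by
    rw [hy, setAverage_eq, hvol, intervalIntegral.integral_of_le hab.le, smul_eq_mul, one_div]
  rw [intervalIntegral.integral_of_le hab.le, hy', ← hvol, ← measureReal_restrict_apply_univ]
  exact integral_abs_sub_average_le (hf.mono_set Ioc_subset_Icc_self)
    (ae_restrict_of_forall_mem measurableSet_Ioc fun x hx ↦ hrange x (Ioc_subset_Icc_self hx))

/-- If `f : [a,b] → [c,d]` is integrable and `y` is its mean value, then
`∫_a^b |f(x) − y| dx ≤ (b−a)(d−c)/2`. -/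
theorem stmt1 (a b c d : ℝ) (hab : a < b) (hcd : c ≤ d) (f : ℝ → ℝ)
    (hf : IntegrableOn f (Set.Icc a b))
    (hrange : ∀ x ∈ Set.Icc a b, f x ∈ Set.Icc c d)
    (y : ℝ) (hy : y = (1 / (b - a)) * ∫ x in a..b, f x) :
    (∫ x in a..b, |f x - y|) ≤ (b - a) * (d - c) / 2 :=
  stmt1_general a b c d hab f hf hrange y hy
end

section
/- Let X be a real-valued random variable with density f. Then δ(X mod 1, U[0,1)) ≤ TV(f)/4, where TV(f) is the total variation of f restricted to the minimal integer-delineated interval containing its support. -/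
open MeasureTheory ProbabilityTheory Set

/-- Total variation distance between two measures on `ℝ`:
`sup { |μ A − ν A| : A Borel }`. -/
noncomputable def tvDist (μ ν : MeasureTheory.Measure ℝ) : ℝ :=
  ⨆ A : {A : Set ℝ // MeasurableSet A}, |(μ A.1).toReal - (ν A.1).toReal|

/-- The uniform distribution on a set `s ⊆ ℝ`. -/
noncomputable def unifMeasure (s : Set ℝ) : MeasureTheory.Measure ℝ :=
  (volume s)⁻¹ • volume.restrict s

/-- `inf { k ∈ ℤ : f([k,k+1)) ≠ {0} }`, as an extended real (possibly `±∞`). -/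
noncomputable def tvLo (f : ℝ → ℝ) : EReal :=
  sInf {x : EReal | ∃ k : ℤ, x = ((k : ℝ) : EReal) ∧ f '' Set.Ico (k : ℝ) (k + 1) ≠ {0}}

/-- `sup { k ∈ ℤ : f((k−1,k]) ≠ {0} }`, as an extended real (possibly `±∞`). -/
noncomputable def tvHi (f : ℝ → ℝ) : EReal :=
  sSup {x : EReal | ∃ k : ℤ, x = ((k : ℝ) : EReal) ∧ f '' Set.Ioc ((k : ℝ) - 1) k ≠ {0}}

/-- The total variation of `f` restricted to the minimal integer-delineated interval
containing its support: the supremum of `∑ |f(x_{n+1}) − f(x_n)|` over increasing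
sequences in `(tvLo f, tvHi f)`. -/
noncomputable def TV (f : ℝ → ℝ) : ENNReal :=
  eVariationOn f {x : ℝ | tvLo f < (x : EReal) ∧ (x : EReal) < tvHi f}

/-!
Let `G t = ∑ₖ f (t + k)`, the density of `X mod 1` on `[0,1)`. For `t, t' ∈ (0,1)` the differences
`f (t + k) - f (t' + k)` are increments of `f` over disjoint intervals of its support interval, so
`G t ≤ G t' + V` with `V = TV f`. Integrating over `t ∈ B`, `t' ∈ Bᶜ` gives
`λ Bᶜ · P B ≤ λ B · P Bᶜ + λ B · λ Bᶜ · V`; together with the same inequality for `Bᶜ` this yields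
`|P B - λ B| ≤ λ B (1 - λ B) V ≤ V / 4`.
-/

open scoped ENNReal

def tvInterval (f : ℝ → ℝ) : Set ℝ := {x : ℝ | tvLo f < (x : EReal) ∧ (x : EReal) < tvHi f}

section Support

variable {f : ℝ → ℝ} {x : ℝ}

lemma tvLo_le_floor (hx : f x ≠ 0) : tvLo f ≤ ((⌊x⌋ : ℝ) : EReal) :=
  sInf_le ⟨⌊x⌋, rfl, fun h ↦ hx <| h.subset ⟨x, ⟨Int.floor_le x, Int.lt_floor_add_one x⟩, rfl⟩⟩

lemma ceil_le_tvHi (hx : f x ≠ 0) : ((⌈x⌉ : ℝ) : EReal) ≤ tvHi f :=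
  le_sSup ⟨⌈x⌉, rfl, fun h ↦ hx <| h.subset
    ⟨x, ⟨by linarith [Int.ceil_lt_add_one x], Int.le_ceil x⟩, rfl⟩⟩

lemma tvLo_le_of_ne_zero (hx : f x ≠ 0) : tvLo f ≤ (x : EReal) :=
  (tvLo_le_floor hx).trans (EReal.coe_le_coe_iff.2 (Int.floor_le x))

lemma le_tvHi_of_ne_zero (hx : f x ≠ 0) : (x : EReal) ≤ tvHi f :=
  (EReal.coe_le_coe_iff.2 (Int.le_ceil x)).trans (ceil_le_tvHi hx)

lemma eq_zero_of_notMem_tvInterval (hx : x ∉ tvInterval f) (hlo : x ≠ (tvLo f).toReal)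
    (hhi : x ≠ (tvHi f).toReal) : f x = 0 := by
  by_contra h0
  refine hx ⟨(tvLo_le_of_ne_zero h0).lt_of_ne fun h ↦ hlo ?_,
    (le_tvHi_of_ne_zero h0).lt_of_ne fun h ↦ hhi ?_⟩
  · rw [h, EReal.toReal_coe]
  · rw [← h, EReal.toReal_coe]

lemma Ioo_subset_tvInterval_or_eqOn_zero (f : ℝ → ℝ) (k : ℤ) :
    Ioo (k : ℝ) (k + 1) ⊆ tvInterval f ∨ EqOn f 0 (Ioo (k : ℝ) (k + 1)) := by
  refine or_iff_not_imp_right.2 fun h ↦ ?_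
  simp only [EqOn, Pi.zero_apply, not_forall] at h
  obtain ⟨x, hx, hfx⟩ := h
  have hlo := tvLo_le_floor hfx
  have hhi := ceil_le_tvHi hfx
  rw [Int.floor_eq_iff.2 ⟨hx.1.le, hx.2⟩] at hlo
  rw [(Int.ceil_eq_iff (z := k + 1)).2
    ⟨by push_cast; linarith [hx.1], by push_cast; exact hx.2.le⟩] at hhi
  push_cast at hhi
  exact fun z hz ↦ ⟨hlo.trans_lt (EReal.coe_lt_coe_iff.2 hz.1),
    (EReal.coe_lt_coe_iff.2 hz.2).trans_le hhi⟩

end Support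

lemma ordConnected_tvInterval (f : ℝ → ℝ) : OrdConnected (tvInterval f) :=
  ⟨fun _ hx _ hz _ hw ↦ ⟨hx.1.trans_le (EReal.coe_le_coe_iff.2 hw.1),
    (EReal.coe_le_coe_iff.2 hw.2).trans_lt hz.2⟩⟩

lemma aemeasurable_of_TV_ne_top {f : ℝ → ℝ} (hV : TV f ≠ ⊤) : AEMeasurable f := by
  have hS : MeasurableSet (tvInterval f) := (ordConnected_tvInterval f).measurableSet
  obtain ⟨p, q, hp, hq, hpq⟩ :=
    (show BoundedVariationOn f (tvInterval f) from hV).locallyBoundedVariationOn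
      |>.exists_monotoneOn_sub_monotoneOn
  have hin : AEMeasurable f (volume.restrict (tvInterval f)) := by
    have : AEMeasurable (p - q) (volume.restrict (tvInterval f)) :=
      (aemeasurable_restrict_of_monotoneOn hS hp).sub (aemeasurable_restrict_of_monotoneOn hS hq)
    rwa [← hpq] at this
  have hout : f =ᵐ[volume.restrict (tvInterval f)ᶜ] 0 := by
    have hnull : volume ({(tvLo f).toReal, (tvHi f).toReal} : Set ℝ) = 0 :=
      (toFinite _).measure_zero _
    filter_upwards [ae_restrict_mem hS.compl,
      ae_restrict_of_ae (measure_eq_zero_iff_ae_notMem.1 hnull)] with x hx hx'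
    simp only [mem_insert_iff, mem_singleton_iff, not_or] at hx'
    exact eq_zero_of_notMem_tvInterval hx hx'.1 hx'.2
  rw [← Measure.restrict_univ (μ := volume), ← union_compl_self (tvInterval f),
    aemeasurable_union_iff]
  exact ⟨hin, aemeasurable_const.congr hout.symm⟩

theorem sum_edist_add_intCast_le_eVariationOn {E : Type*} [PseudoEMetricSpace E] (g : ℝ → E)
    {s : Set ℝ} {a b : ℝ} (hab : dist a b ≤ 1) {K : Finset ℤ}
    (hK : ∀ k ∈ K, a + k ∈ s ∧ b + k ∈ s) :
    ∑ k ∈ K, edist (g (a + k)) (g (b + k)) ≤ eVariationOn g s := by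
  wlog hle : a ≤ b generalizing a b
  · simpa only [edist_comm] using
      this (dist_comm a b ▸ hab) (fun k hk ↦ (hK k hk).symm) (le_of_not_ge hle)
  -- `b ≤ a + 1` keeps the intervals `[a + k, b + k]` in increasing order of `k`.
  have hba : b ≤ a + 1 := by
    linarith [Real.dist_eq a b ▸ hab, le_abs_self (b - a), abs_sub_comm a b]
  suffices ∑ k ∈ K, edist (g (a + k)) (g (b + k)) ≤
      eVariationOn g (s ∩ ⋃ k ∈ K, Icc (a + k) (b + k)) from
    this.trans (eVariationOn.mono g inter_subset_left)
  induction K using Finset.induction_on_max with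
  | empty => simp
  | insert m K hm ih =>
    have hmK : m ∉ K := fun h ↦ (hm m h).false
    rw [Finset.sum_insert hmK, add_comm]
    have hmem := hK m (Finset.mem_insert_self m K)
    have hlast : edist (g (a + m)) (g (b + m)) ≤ eVariationOn g (s ∩ Icc (a + m) (b + m)) :=
      eVariationOn.edist_le g ⟨hmem.1, by simp [hle]⟩ ⟨hmem.2, by simp [hle]⟩
    refine (add_le_add (ih fun k hk ↦ hK k (Finset.mem_insert_of_mem hk)) hlast).trans ?_
    rw [Finset.set_biUnion_insert, union_comm, inter_union_distrib_left]
    refine eVariationOn.add_le_union g fun x hx z hz ↦ ?_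
    obtain ⟨k, hk, hxk⟩ := mem_iUnion₂.1 hx.2
    have : (k : ℝ) + 1 ≤ m := by exact_mod_cast hm k hk
    linarith [hxk.2, hz.2.1]

noncomputable def periodize (g : ℝ → ℝ≥0∞) (t : ℝ) : ℝ≥0∞ := ∑' k : ℤ, g (t + k)

lemma ofReal_le_ofReal_add_edist (a b : ℝ) :
    ENNReal.ofReal a ≤ ENNReal.ofReal b + edist a b := by
  rw [edist_dist, Real.dist_eq]
  calc ENNReal.ofReal a ≤ ENNReal.ofReal (b + |a - b|) :=
        ENNReal.ofReal_le_ofReal (by linarith [le_abs_self (a - b)])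
    _ ≤ _ := ENNReal.ofReal_add_le

theorem periodize_ofReal_le_add_TV (f : ℝ → ℝ) {y y' : ℝ} (hy : y ∈ Ioo (0 : ℝ) 1)
    (hy' : y' ∈ Ioo (0 : ℝ) 1) :
    periodize (fun x ↦ ENNReal.ofReal (f x)) y ≤
      periodize (fun x ↦ ENNReal.ofReal (f x)) y' + TV f := by
  classical
  rw [periodize, ENNReal.tsum_eq_iSup_sum]
  refine iSup_le fun K ↦ ?_
  set K' := K.filter fun k : ℤ ↦ Ioo (k : ℝ) (k + 1) ⊆ tvInterval f
  have hmem : ∀ {z}, z ∈ Ioo (0 : ℝ) 1 → ∀ k : ℤ, z + k ∈ Ioo (k : ℝ) (k + 1) :=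
    fun hz k ↦ ⟨by linarith [hz.1], by linarith [hz.2]⟩
  have hsupp : ∀ k ∈ K, ENNReal.ofReal (f (y + k)) ≠ 0 → k ∈ K' := fun k hk hne ↦
    Finset.mem_filter.2 ⟨hk, (Ioo_subset_tvInterval_or_eqOn_zero f k).resolve_right
      fun h ↦ hne (by simp [h (hmem hy k)])⟩
  calc ∑ k ∈ K, ENNReal.ofReal (f (y + k))
      = ∑ k ∈ K', ENNReal.ofReal (f (y + k)) := (Finset.sum_subset (Finset.filter_subset _ _)
        fun k hk hk' ↦ by_contra fun hne ↦ hk' (hsupp k hk hne)).symm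
    _ ≤ ∑ k ∈ K', (ENNReal.ofReal (f (y' + k)) + edist (f (y + k)) (f (y' + k))) :=
        Finset.sum_le_sum fun k _ ↦ ofReal_le_ofReal_add_edist _ _
    _ = ∑ k ∈ K', ENNReal.ofReal (f (y' + k)) + ∑ k ∈ K', edist (f (y + k)) (f (y' + k)) :=
        Finset.sum_add_distrib
    _ ≤ ∑' k : ℤ, ENNReal.ofReal (f (y' + k)) + TV f := by
        refine add_le_add (ENNReal.sum_le_tsum K') (sum_edist_add_intCast_le_eVariationOn f ?_ ?_)
        · rw [Real.dist_eq, abs_le]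
          constructor <;> linarith [hy.1, hy.2, hy'.1, hy'.2]
        · intro k hk
          have hsub := (Finset.mem_filter.1 hk).2
          exact ⟨hsub (hmem hy k), hsub (hmem hy' k)⟩

lemma preimage_fract_eq_iUnion (B : Set ℝ) :
    Int.fract ⁻¹' B = ⋃ k : ℤ, (· - (k : ℝ)) ⁻¹' (B ∩ Ico 0 1) := by
  ext x
  simp only [mem_preimage, mem_iUnion, mem_inter_iff, mem_Ico]
  constructor
  · exact fun hx ↦ ⟨⌊x⌋, hx, Int.fract_nonneg x, Int.fract_lt_one x⟩
  · rintro ⟨k, hk, h0, h1⟩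
    rwa [← Int.fract_sub_intCast x k, Int.fract_eq_self.2 ⟨h0, h1⟩]

lemma pairwise_disjoint_preimage_sub_intCast {S : Set ℝ} (hS : S ⊆ Ico 0 1) :
    Pairwise (Function.onFun Disjoint fun k : ℤ ↦ (· - (k : ℝ)) ⁻¹' S) := fun i j hij ↦
  disjoint_left.2 fun x hi hj ↦ hij <| by
    have hfloor : ∀ k : ℤ, x - k ∈ S → ⌊x⌋ = k := fun k hk ↦
      Int.floor_eq_iff.2 ⟨by linarith [(hS hk).1], by linarith [(hS hk).2]⟩
    rw [← hfloor i hi, hfloor j hj]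

theorem map_fract_withDensity {g : ℝ → ℝ≥0∞} (hg : AEMeasurable g) :
    (volume.withDensity g).map Int.fract =
      (volume.restrict (Ico 0 1)).withDensity (periodize g) := by
  ext B hB
  have hS : MeasurableSet (B ∩ Ico 0 1) := hB.inter measurableSet_Ico
  have hpre : ∀ k : ℤ, MeasurableSet ((· - (k : ℝ)) ⁻¹' (B ∩ Ico 0 1)) :=
    fun k ↦ hS.preimage (measurable_sub_const _)
  have htrans : ∀ k : ℤ, ∫⁻ x in (· - (k : ℝ)) ⁻¹' (B ∩ Ico 0 1), g x =
      ∫⁻ t in B ∩ Ico 0 1, g (t + k) := fun k ↦ by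
    simpa using (measurePreserving_sub_right volume (k : ℝ)).setLIntegral_comp_preimage_emb
      (measurableEmbedding_subRight (k : ℝ)) (fun t ↦ g (t + k)) (B ∩ Ico 0 1)
  rw [Measure.map_apply measurable_fract hB, withDensity_apply _ hB, Measure.restrict_restrict hB,
    preimage_fract_eq_iUnion, withDensity_apply _ (MeasurableSet.iUnion hpre),
    lintegral_iUnion hpre (pairwise_disjoint_preimage_sub_intCast inter_subset_right)]
  exact (tsum_congr htrans).trans (lintegral_tsum fun k : ℤ ↦ (hg.comp_quasiMeasurePreserving
    (measurePreserving_add_right volume (k : ℝ)).quasiMeasurePreserving).restrict).symm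

section WithDensity

variable {α : Type*} [MeasurableSpace α] {μ : Measure α} {G : α → ℝ≥0∞} {V : ℝ≥0∞}

theorem measure_mul_withDensity_le [IsFiniteMeasure μ] (hG : ∀ᵐ y ∂μ, ∀ᵐ x ∂μ, G x ≤ G y + V)
    {B C : Set α} (hB : MeasurableSet B) (hC : MeasurableSet C) :
    μ C * μ.withDensity G B ≤ μ B * μ.withDensity G C + μ B * μ C * V := by
  have hpoint : ∀ᵐ y ∂μ, μ.withDensity G B ≤ (G y + V) * μ B := by
    filter_upwards [hG] with y hy
    rw [withDensity_apply _ hB, ← setLIntegral_const]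
    exact lintegral_mono_ae (ae_restrict_of_ae hy)
  calc μ C * μ.withDensity G B = ∫⁻ _ in C, μ.withDensity G B ∂μ := by
        rw [setLIntegral_const, mul_comm]
    _ ≤ ∫⁻ y in C, (G y * μ B + V * μ B) ∂μ := by
        simp_rw [← add_mul]
        exact lintegral_mono_ae (ae_restrict_of_ae hpoint)
    _ = μ B * μ.withDensity G C + μ B * μ C * V := by
        rw [lintegral_add_right _ measurable_const, lintegral_mul_const' _ _ (measure_ne_top μ B),
          setLIntegral_const, ← withDensity_apply _ hC]
        ring

lemma abs_sub_le_of_cross_le {a m V : ℝ} (hV : 0 ≤ V)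
    (h₁ : (1 - a) * m ≤ a * (1 - m) + a * (1 - a) * V)
    (h₂ : a * (1 - m) ≤ (1 - a) * m + (1 - a) * a * V) : |m - a| ≤ V / 4 := by
  have hquarter : a * (1 - a) * V ≤ V / 4 := by nlinarith [sq_nonneg (2 * a - 1)]
  rw [abs_le]
  constructor <;> nlinarith

theorem abs_real_withDensity_sub_le [IsProbabilityMeasure μ]
    [IsProbabilityMeasure (μ.withDensity G)] (hV : V ≠ ⊤)
    (hG : ∀ᵐ y ∂μ, ∀ᵐ x ∂μ, G x ≤ G y + V) {A : Set α} (hA : MeasurableSet A) :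
    |(μ.withDensity G).real A - μ.real A| ≤ V.toReal / 4 := by
  have r₁ := ENNReal.toReal_mono (by finiteness) (measure_mul_withDensity_le hG hA hA.compl)
  have r₂ := ENNReal.toReal_mono (by finiteness) (measure_mul_withDensity_le hG hA.compl hA)
  rw [ENNReal.toReal_add (by finiteness) (by finiteness)] at r₁ r₂
  simp only [ENNReal.toReal_mul, ← measureReal_def, probReal_compl_eq_one_sub hA] at r₁ r₂
  exact abs_sub_le_of_cross_le ENNReal.toReal_nonneg r₁ r₂

end WithDensity

lemma unifMeasure_Ico_zero_one : unifMeasure (Ico 0 1) = volume.restrict (Ico 0 1) := by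
  simp [unifMeasure, Real.volume_Ico]

instance : IsProbabilityMeasure (volume.restrict (Ico (0 : ℝ) 1)) :=
  ⟨by simp [Real.volume_Ico]⟩

lemma tvDist_le {μ ν : Measure ℝ} {c : ℝ} (hc : 0 ≤ c)
    (h : ∀ A, MeasurableSet A → |(μ A).toReal - (ν A).toReal| ≤ c) : tvDist μ ν ≤ c :=
  Real.iSup_le (fun A ↦ h A.1 A.2) hc

theorem stmt5_general {Ω : Type*} [MeasureSpace Ω] [IsProbabilityMeasure (ℙ : Measure Ω)]
    (X : Ω → ℝ) (hX : Measurable X) (f : ℝ → ℝ)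
    (hf : Measure.map X (ℙ : Measure Ω) = volume.withDensity (fun x => ENNReal.ofReal (f x))) :
    ENNReal.ofReal
        (tvDist (Measure.map (fun ω => Int.fract (X ω)) (ℙ : Measure Ω))
          (unifMeasure (Set.Ico 0 1))) ≤ TV f / 4 := by
  by_cases hV : TV f = ⊤
  · simp [hV, ENNReal.top_div]
  set g := fun x ↦ ENNReal.ofReal (f x)
  have hmap : Measure.map (fun ω ↦ Int.fract (X ω)) ℙ =
      (volume.restrict (Ico 0 1)).withDensity (periodize g) := by
    rw [show (fun ω ↦ Int.fract (X ω)) = Int.fract ∘ X from rfl,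
      ← Measure.map_map measurable_fract hX, hf,
      map_fract_withDensity (aemeasurable_of_TV_ne_top hV).ennreal_ofReal]
  have : IsProbabilityMeasure ((volume.restrict (Ico 0 1)).withDensity (periodize g)) :=
    hmap ▸ Measure.isProbabilityMeasure_map (measurable_fract.comp hX).aemeasurable
  have hIoo : ∀ᵐ x ∂volume.restrict (Ico (0 : ℝ) 1), x ∈ Ioo (0 : ℝ) 1 := by
    rw [Measure.restrict_congr_set Ioo_ae_eq_Ico.symm]
    exact ae_restrict_mem measurableSet_Ioo
  have hdist : tvDist (Measure.map (fun ω ↦ Int.fract (X ω)) ℙ) (unifMeasure (Ico 0 1)) ≤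
      (TV f).toReal / 4 := by
    rw [hmap, unifMeasure_Ico_zero_one]
    refine tvDist_le (by positivity) fun A hA ↦ abs_real_withDensity_sub_le hV ?_ hA
    filter_upwards [hIoo] with y hy
    filter_upwards [hIoo] with x hx
    exact periodize_ofReal_le_add_TV f hx hy
  calc _ ≤ ENNReal.ofReal ((TV f).toReal / 4) := ENNReal.ofReal_le_ofReal hdist
    _ = TV f / 4 := by
      rw [ENNReal.ofReal_div_of_pos (by norm_num), ENNReal.ofReal_toReal hV]
      norm_num

/-- If `X` has density `f`, then `δ(X mod 1, U[0,1)) ≤ TV(f)/4`. -/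
theorem stmt5 {Ω : Type*} [MeasureSpace Ω] [IsProbabilityMeasure (ℙ : Measure Ω)]
    (X : Ω → ℝ) (hX : Measurable X) (f : ℝ → ℝ) (hf0 : ∀ x, 0 ≤ f x)
    (hf : Measure.map X (ℙ : Measure Ω) = volume.withDensity (fun x => ENNReal.ofReal (f x))) :
    ENNReal.ofReal
        (tvDist (Measure.map (fun ω => Int.fract (X ω)) (ℙ : Measure Ω))
          (unifMeasure (Set.Ico 0 1))) ≤ TV f / 4 :=
  stmt5_general X hX f hf
end

section
/- Fix b > 1. Let Y be uniformly distributed on [1,b] and let X = log_b Y. Then for every positive integer n, δ(nX mod 1, U[0,1)) ≤ (ln b)/(8n). -/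
/-!
With `c = ln b / n` we have `n X = ln Y / c`. On the `k`-th period `[e^{ck}, e^{c(k+1)})` of `Y`
the map `y ↦ fract (ln y / c)` inverts `u ↦ e^{c(u+k)}`, so summing the change of variables
formula over `k < n` shows that `n X mod 1` has density `g(u) = c e^{cu} / (e^c - 1)` on `[0,1)`.
As `g` is increasing and crosses `1` once, at `u₀`, every `|P(nX mod 1 ∈ A) - λ(A)|` is at most
`∫_{u₀}^1 (g - 1) = u₀ - G(u₀)`, with `G` the distribution function of `g`. In the variables
`h = c/2`, `w = 2u - 1` the bound `u - G(u) ≤ c/8` reads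
`cosh h + w sinh h - e^{hw} ≤ (h/2) sinh h`, which follows from the tangent line of `exp` at
`ln (sinh h / h)` together with `sinh h ≤ h e^{h²/6}` and `h cosh h ≤ (1 + h²/3) sinh h`.
-/

open MeasureTheory ProbabilityTheory Set

open Real
open scoped Nat

lemma six_pow_mul_factorial_le_factorial (n : ℕ) : 6 ^ n * n ! ≤ (2 * n + 1)! := by
  induction n with
  | zero => simp
  | succ n ih =>
    rw [show 2 * (n + 1) + 1 = 2 * n + 1 + 1 + 1 by ring, Nat.factorial_succ (2 * n + 1 + 1),
      Nat.factorial_succ (2 * n + 1), Nat.factorial_succ n, pow_succ]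
    have h : 6 * (n + 1) ≤ (2 * n + 1 + 1 + 1) * (2 * n + 1 + 1) := by nlinarith
    nlinarith [Nat.mul_le_mul_left (6 * (n + 1)) ih, Nat.mul_le_mul_right (2 * n + 1)! h]

lemma sinh_le_mul_cosh {x : ℝ} (hx : 0 ≤ x) : sinh x ≤ x * cosh x := by
  refine hasSum_le (fun n => ?_) (hasSum_sinh x) ((hasSum_cosh x).mul_left x)
  rw [pow_succ', mul_div_assoc]
  gcongr
  omega

lemma sinh_le_mul_exp_sq_div_six {x : ℝ} (hx : 0 ≤ x) : sinh x ≤ x * exp (x ^ 2 / 6) := by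
  rw [exp_eq_exp_ℝ]
  refine hasSum_le (fun n => ?_) (hasSum_sinh x)
    ((NormedSpace.expSeries_div_hasSum_exp (x ^ 2 / 6)).mul_left x)
  rw [div_pow, ← pow_mul, pow_succ', mul_div_assoc, div_div]
  gcongr
  exact_mod_cast six_pow_mul_factorial_le_factorial n

lemma mul_cosh_le_one_add_sq_div_three_mul_sinh {x : ℝ} (hx : 0 ≤ x) :
    x * cosh x ≤ (1 + x ^ 2 / 3) * sinh x := by
  let f : ℝ → ℝ := fun x => (1 + x ^ 2 / 3) * sinh x - x * cosh x
  have hf : ∀ x, HasDerivAt f (x / 3 * (x * cosh x - sinh x)) x := fun x => by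
    refine ((((hasDerivAt_pow 2 x).div_const 3).const_add 1).mul (hasDerivAt_sinh x)).sub
      ((hasDerivAt_id' x).mul (hasDerivAt_cosh x)) |>.congr_deriv ?_
    push_cast
    ring
  have hmono : MonotoneOn f (Ici 0) :=
    monotoneOn_of_hasDerivWithinAt_nonneg (convex_Ici 0)
      (fun x _ => (hf x).continuousAt.continuousWithinAt)
      (fun x _ => (hf x).hasDerivWithinAt)
      (fun y hy => by
        rw [interior_Ici] at hy
        exact mul_nonneg (by linarith [hy.out]) (sub_nonneg.2 (sinh_le_mul_cosh hy.out.le)))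
  simpa [f] using hmono self_mem_Ici hx hx

lemma cosh_add_mul_sinh_sub_exp_le {h : ℝ} (hh : 0 < h) (w : ℝ) :
    cosh h + w * sinh h - exp (h * w) ≤ h / 2 * sinh h := by
  set q := sinh h / h
  have hq : 0 < q := div_pos (sinh_pos_iff.2 hh) hh
  have hqh : sinh h = q * h := (div_mul_cancel₀ _ hh.ne').symm
  -- the tangent of `exp` at `log q` has slope `q`, so `q h w = w sinh h` cancels out
  have tangent : q * (1 + h * w - log q) ≤ exp (h * w) := by
    have := add_one_le_exp (h * w - log q)
    rw [exp_sub, exp_log hq, le_div_iff₀ hq] at this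
    linarith
  have hlog : log q ≤ h ^ 2 / 6 := by
    rw [log_le_iff_le_exp hq, div_le_iff₀ hh, mul_comm]
    exact sinh_le_mul_exp_sq_div_six hh.le
  have hcosh : cosh h ≤ q * (1 + h ^ 2 / 3) := by
    refine le_of_mul_le_mul_left ?_ hh
    nlinarith [mul_cosh_le_one_add_sq_div_three_mul_sinh hh.le]
  rw [hqh]
  nlinarith [mul_le_mul_of_nonneg_left hlog hq.le]

lemma setIntegral_le_of_nonneg_on_of_nonpos_on_sdiff {α : Type*} [MeasurableSpace α]
    {μ : Measure α} {f : α → ℝ} {s E P : Set α} (hf : IntegrableOn f s μ)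
    (hE : MeasurableSet E) (hEs : E ⊆ s) (hP : MeasurableSet P) (hPs : P ⊆ s)
    (hpos : ∀ x ∈ P, 0 ≤ f x) (hneg : ∀ x ∈ s \ P, f x ≤ 0) :
    ∫ x in E, f x ∂μ ≤ ∫ x in P, f x ∂μ := by
  rw [← integral_inter_add_sdiff hP (hf.mono_set hEs)]
  have hinter : ∫ x in E ∩ P, f x ∂μ ≤ ∫ x in P, f x ∂μ :=
    setIntegral_mono_set (hf.mono_set hPs) (ae_restrict_of_forall_mem hP hpos)
      inter_subset_right.eventuallyLE
  have hsdiff : ∫ x in E \ P, f x ∂μ ≤ 0 :=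
    setIntegral_nonpos (hE.diff hP) fun x hx => hneg x ⟨hEs hx.1, hx.2⟩
  linarith

noncomputable def truncExpCDF (c u : ℝ) : ℝ := (exp (c * u) - 1) / (exp c - 1)

noncomputable def truncExpDensity (c u : ℝ) : ℝ := c * exp (c * u) / (exp c - 1)

lemma sub_truncExpCDF_le {c : ℝ} (hc : 0 < c) (u : ℝ) : u - truncExpCDF c u ≤ c / 8 := by
  have key := cosh_add_mul_sinh_sub_exp_le (half_pos hc) (2 * u - 1)
  have hz : exp (c / 2 * (2 * u - 1)) = exp (c * u) / exp (c / 2) := by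
    rw [← exp_sub]; ring_nf
  have hc2 : exp c = exp (c / 2) * exp (c / 2) := by rw [← exp_add, add_halves]
  rw [cosh_eq, sinh_eq, exp_neg, hz] at key
  unfold truncExpCDF
  rw [hc2]
  set t := exp (c / 2)
  have ht : 1 < t := one_lt_exp_iff.2 (half_pos hc)
  have hT : 0 < t * t - 1 := by nlinarith
  have key' := mul_le_mul_of_nonneg_left key (by positivity : (0 : ℝ) ≤ 2 * t)
  rw [show 2 * t * ((t + t⁻¹) / 2 + (2 * u - 1) * ((t - t⁻¹) / 2) - exp (c * u) / t)
      = t * t + 1 + (2 * u - 1) * (t * t - 1) - 2 * exp (c * u) by field_simp,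
    show 2 * t * (c / 2 / 2 * ((t - t⁻¹) / 2)) = c / 4 * (t * t - 1) by field_simp; ring] at key'
  rw [sub_le_comm, le_div_iff₀ hT]
  linarith

lemma hasDerivAt_truncExpCDF (c u : ℝ) :
    HasDerivAt (truncExpCDF c) (truncExpDensity c u) u :=
  ((((hasDerivAt_id' u).const_mul c).exp.sub_const 1).div_const (exp c - 1)).congr_deriv
    (by rw [truncExpDensity]; ring)

lemma continuous_truncExpDensity (c : ℝ) : Continuous (truncExpDensity c) := by
  unfold truncExpDensity
  fun_prop

lemma continuous_truncExpDensity_sub_one (c : ℝ) :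
    Continuous fun u => truncExpDensity c u - 1 :=
  (continuous_truncExpDensity c).sub continuous_const

lemma truncExpCDF_one {c : ℝ} (hc : c ≠ 0) : truncExpCDF c 1 = 1 := by
  rw [truncExpCDF, mul_one, div_self (sub_ne_zero.2 (mt (exp_eq_one_iff c).1 hc))]

lemma integral_Ico_truncExpDensity_sub_one (c : ℝ) {a b : ℝ} (hab : a ≤ b) :
    ∫ u in Ico a b, (truncExpDensity c u - 1)
      = (truncExpCDF c b - b) - (truncExpCDF c a - a) := by
  rw [integral_Ico_eq_integral_Ioo, ← integral_Ioc_eq_integral_Ioo,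
    ← intervalIntegral.integral_of_le hab]
  exact intervalIntegral.integral_eq_sub_of_hasDerivAt
    (fun u _ => (hasDerivAt_truncExpCDF c u).sub (hasDerivAt_id' u))
    ((continuous_truncExpDensity_sub_one c).intervalIntegrable a b)

lemma one_le_truncExpDensity_iff {c : ℝ} (hc : 0 < c) {u : ℝ} :
    1 ≤ truncExpDensity c u ↔ log ((exp c - 1) / c) / c ≤ u := by
  have hE : 0 < exp c - 1 := sub_pos.2 (one_lt_exp_iff.2 hc)
  rw [truncExpDensity, one_le_div hE, div_le_iff₀ hc, log_le_iff_le_exp (div_pos hE hc),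
    div_le_iff₀' hc, mul_comm u]

lemma setIntegral_truncExpDensity_sub_one_le {c : ℝ} (hc : 0 < c) {E : Set ℝ}
    (hE : MeasurableSet E) (hEs : E ⊆ Ico 0 1) :
    ∫ u in E, (truncExpDensity c u - 1) ≤ c / 8 := by
  -- the increasing density crosses `1` at `u₀`
  set u₀ := log ((exp c - 1) / c) / c
  have h0 : 0 ≤ u₀ :=
    div_nonneg (log_nonneg (by rw [le_div_iff₀ hc]; linarith [add_one_le_exp c])) hc.le
  have h1 : u₀ ≤ 1 := by
    refine (one_le_truncExpDensity_iff hc).1 ?_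
    rw [truncExpDensity, mul_one, one_le_div (sub_pos.2 (one_lt_exp_iff.2 hc))]
    have := add_one_le_exp (-c)
    rw [exp_neg] at this
    nlinarith [mul_inv_cancel₀ (exp_pos c).ne', exp_pos c]
  calc ∫ u in E, (truncExpDensity c u - 1)
      ≤ ∫ u in Ico u₀ 1, (truncExpDensity c u - 1) :=
        setIntegral_le_of_nonneg_on_of_nonpos_on_sdiff
          ((continuous_truncExpDensity_sub_one c).integrableOn_Icc.mono_set
            Ico_subset_Icc_self) hE hEs measurableSet_Ico (Ico_subset_Ico_left h0)
          (fun u hu => sub_nonneg.2 ((one_le_truncExpDensity_iff hc).2 hu.1))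
          (fun u hu => sub_nonpos.2 (not_le.1 fun h =>
            hu.2 ⟨(one_le_truncExpDensity_iff hc).1 h, hu.1.2⟩).le)
    _ = u₀ - truncExpCDF c u₀ := by
        rw [integral_Ico_truncExpDensity_sub_one c h1, truncExpCDF_one hc.ne']; ring
    _ ≤ c / 8 := sub_truncExpCDF_le hc u₀

lemma unifMeasure_eq_cond (s : Set ℝ) : unifMeasure s = volume[|s] := rfl

lemma tvDist_le_of_forall_sub_le {μ ν : Measure ℝ} [IsProbabilityMeasure μ]
    [IsProbabilityMeasure ν] {ε : ℝ}
    (h : ∀ A, MeasurableSet A → μ.real A - ν.real A ≤ ε) : tvDist μ ν ≤ ε := by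
  have : Nonempty {A : Set ℝ // MeasurableSet A} := ⟨⟨∅, .empty⟩⟩
  refine ciSup_le fun ⟨A, hA⟩ => abs_sub_le_iff.2 ⟨h A hA, ?_⟩
  have hcompl := h Aᶜ hA.compl
  rw [probReal_compl_eq_one_sub hA, probReal_compl_eq_one_sub hA] at hcompl
  change ν.real A - μ.real A ≤ ε
  linarith

lemma measurable_fract_log_div (c : ℝ) : Measurable fun y => Int.fract (log y / c) :=
  (measurable_log.div_const c).fract

lemma preimage_fract_log_div_inter_Ico_exp {c : ℝ} (hc : 0 < c) (A : Set ℝ) (k : ℕ) :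
    (fun y => Int.fract (log y / c)) ⁻¹' A ∩ Ico (exp (c * k)) (exp (c * (k + 1)))
      = (fun u => exp (c * (u + k))) '' (A ∩ Ico 0 1) := by
  have himage : (fun u => exp (c * (u + k))) '' Ico 0 1
      = Ico (exp (c * k)) (exp (c * (k + 1))) := by
    rw [show (fun u => exp (c * (u + k))) = exp ∘ (c * · + c * k) by ext; simp [mul_add],
      image_comp, image_affine_Ico hc, image_exp_Ico]
    ring_nf
  have hpre : (fun u => exp (c * (u + k))) ⁻¹' ((fun y => Int.fract (log y / c)) ⁻¹' A)
      = Int.fract ⁻¹' A := by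
    ext u
    simp [hc.ne']
  rw [← himage, inter_comm, ← image_inter_preimage, hpre]
  congr 1
  ext u
  simp only [mem_inter_iff, mem_preimage, mem_Ico]
  constructor
  · rintro ⟨hu, hA⟩
    rw [Int.fract_eq_self.2 hu] at hA
    exact ⟨hA, hu⟩
  · rintro ⟨hA, hu⟩
    rw [Int.fract_eq_self.2 hu]
    exact ⟨hu, hA⟩

lemma measureReal_image_exp_mul_add {c : ℝ} (hc : 0 < c) {E : Set ℝ} (hE : MeasurableSet E)
    (k : ℝ) :
    volume.real ((fun u => exp (c * (u + k))) '' E) = ∫ u in E, c * exp (c * (u + k)) := by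
  have hderiv : ∀ u ∈ E,
      HasDerivWithinAt (fun u => exp (c * (u + k))) (c * exp (c * (u + k))) E u := fun u _ =>
    (((hasDerivAt_id' u).add_const k).const_mul c).exp.hasDerivWithinAt.congr_deriv (by ring)
  have hinj : InjOn (fun u => exp (c * (u + k))) E := fun x _ y _ h => by
    simpa [hc.ne'] using exp_injective h
  rw [← mul_one (volume.real _), ← smul_eq_mul, ← setIntegral_const,
    integral_image_eq_integral_abs_deriv_smul hE hderiv hinj]
  simp [abs_of_pos hc]

lemma measureReal_preimage_fract_log_div_inter_Ico {c : ℝ} (hc : 0 < c) {A : Set ℝ}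
    (hA : MeasurableSet A) (n : ℕ) :
    volume.real ((fun y => Int.fract (log y / c)) ⁻¹' A ∩ Ico 1 (exp (c * n)))
      = (exp (c * n) - 1) * ∫ u in A ∩ Ico 0 1, truncExpDensity c u := by
  induction n with
  | zero => simp
  | succ n ih =>
    have hsplit : Ico 1 (exp (c * ↑(n + 1)))
        = Ico 1 (exp (c * n)) ∪ Ico (exp (c * n)) (exp (c * (n + 1))) := by
      push_cast
      exact (Ico_union_Ico_eq_Ico (one_le_exp (by positivity))
        (exp_le_exp.2 (by nlinarith))).symm
    have hperiod : ∀ u,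
        c * exp (c * (u + n)) = exp (c * n) * (exp c - 1) * truncExpDensity c u := fun u => by
      have : exp c - 1 ≠ 0 := sub_ne_zero.2 (mt (exp_eq_one_iff c).1 hc.ne')
      rw [truncExpDensity, mul_add, exp_add]
      field_simp
    rw [hsplit, inter_union_distrib_left, measureReal_union
      (disjoint_of_subset inter_subset_right inter_subset_right Ico_disjoint_Ico_same)
      ((measurable_fract_log_div c hA).inter measurableSet_Ico)
      (measure_ne_top_of_subset inter_subset_right measure_Ico_lt_top.ne)
      (measure_ne_top_of_subset inter_subset_right measure_Ico_lt_top.ne), ih,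
      preimage_fract_log_div_inter_Ico_exp hc A n,
      measureReal_image_exp_mul_add hc (hA.inter measurableSet_Ico)]
    simp_rw [hperiod, integral_const_mul]
    push_cast
    rw [mul_add, mul_one, exp_add]
    ring

lemma measureReal_map_cond_Icc_fract_log_div {c : ℝ} (hc : 0 < c) {n : ℕ} (hn : n ≠ 0)
    {A : Set ℝ} (hA : MeasurableSet A) :
    ((volume[|Icc 1 (exp (c * n))]).map fun y => Int.fract (log y / c)).real A
      = ∫ u in A ∩ Ico 0 1, truncExpDensity c u := by
  have hb : 1 < exp (c * n) := one_lt_exp_iff.2 (by positivity)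
  rw [measureReal_def, Measure.map_apply (measurable_fract_log_div c) hA,
    cond_apply measurableSet_Icc, inter_comm,
    measure_congr ((ae_eq_refl _).inter Ico_ae_eq_Icc.symm), ENNReal.toReal_mul,
    ← measureReal_def, measureReal_preimage_fract_log_div_inter_Ico hc hA, Real.volume_Icc,
    ENNReal.toReal_inv, ENNReal.toReal_ofReal (by linarith), ← mul_assoc,
    inv_mul_cancel₀ (by linarith), one_mul]

lemma measureReal_cond_Ico_zero_one (A : Set ℝ) :
    (volume[|Ico (0 : ℝ) 1]).real A = volume.real (A ∩ Ico 0 1) := by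
  rw [measureReal_def, cond_apply measurableSet_Ico, Real.volume_Ico, inter_comm]
  simp [measureReal_def]

lemma tvDist_map_cond_Icc_fract_log_div_le {c : ℝ} (hc : 0 < c) {n : ℕ} (hn : n ≠ 0) :
    tvDist ((volume[|Icc 1 (exp (c * n))]).map fun y => Int.fract (log y / c))
      (volume[|Ico 0 1]) ≤ c / 8 := by
  have := cond_isProbabilityMeasure_of_finite (μ := volume) (s := Icc 1 (exp (c * n)))
    (by simpa using one_lt_exp_iff.2 (by positivity)) (by simp)
  have := cond_isProbabilityMeasure_of_finite (μ := volume) (s := Ico (0 : ℝ) 1)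
    (by simp) (by simp)
  have := Measure.isProbabilityMeasure_map (μ := volume[|Icc 1 (exp (c * n))])
    (measurable_fract_log_div c).aemeasurable
  refine tvDist_le_of_forall_sub_le fun A hA => ?_
  have hEs : A ∩ Ico 0 1 ⊆ Icc 0 1 := inter_subset_right.trans Ico_subset_Icc_self
  rw [measureReal_map_cond_Icc_fract_log_div hc hn hA, measureReal_cond_Ico_zero_one,
    ← mul_one (volume.real _), ← smul_eq_mul, ← setIntegral_const,
    ← integral_sub ((continuous_truncExpDensity c).integrableOn_Icc.mono_set hEs)
      (integrableOn_const (measure_ne_top_of_subset hEs measure_Icc_lt_top.ne))]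
  exact setIntegral_truncExpDensity_sub_one_le hc (hA.inter measurableSet_Ico) inter_subset_right

theorem stmt9_general {Ω : Type*} [MeasureSpace Ω]
    (b : ℝ) (hb : 1 < b) (Y : Ω → ℝ) (hY : Measurable Y)
    (hYunif : Measure.map Y (ℙ : Measure Ω) = unifMeasure (Set.Icc 1 b))
    (X : Ω → ℝ) (hX : X = fun ω => Real.logb b (Y ω))
    (n : ℕ) (hn : 0 < n) :
    tvDist (Measure.map (fun ω => Int.fract ((n : ℝ) * X ω)) (ℙ : Measure Ω))
        (unifMeasure (Set.Ico 0 1)) ≤ Real.log b / (8 * n) := by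
  have hn' : (n : ℝ) ≠ 0 := Nat.cast_ne_zero.2 hn.ne'
  set c := log b / n
  have hc : 0 < c := div_pos (log_pos hb) (Nat.cast_pos.2 hn)
  have hb_eq : exp (c * n) = b := by rw [div_mul_cancel₀ _ hn', exp_log (by linarith)]
  have hlaw : (fun ω => Int.fract (n * X ω)) = (fun y => Int.fract (log y / c)) ∘ Y := by
    subst hX
    ext ω
    simp only [Function.comp, logb, c]
    field_simp
  rw [← hb_eq] at hYunif
  rw [hlaw, ← Measure.map_map (measurable_fract_log_div c) hY, hYunif, unifMeasure_eq_cond,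
    unifMeasure_eq_cond]
  calc _ ≤ c / 8 := tvDist_map_cond_Icc_fract_log_div_le hc hn.ne'
    _ = log b / (8 * n) := by simp only [c]; ring

/-- For `b > 1`, `Y ∼ U[1,b]` and `X = log_b Y`:
`δ(nX mod 1, U[0,1)) ≤ (ln b)/(8n)` for all positive integers `n`. -/
theorem stmt9 {Ω : Type*} [MeasureSpace Ω] [IsProbabilityMeasure (ℙ : Measure Ω)]
    (b : ℝ) (hb : 1 < b) (Y : Ω → ℝ) (hY : Measurable Y)
    (hYunif : Measure.map Y (ℙ : Measure Ω) = unifMeasure (Set.Icc 1 b))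
    (X : Ω → ℝ) (hX : X = fun ω => Real.logb b (Y ω))
    (n : ℕ) (hn : 0 < n) :
    tvDist (Measure.map (fun ω => Int.fract ((n : ℝ) * X ω)) (ℙ : Measure Ω))
        (unifMeasure (Set.Ico 0 1)) ≤ Real.log b / (8 * n) :=
  stmt9_general b hb Y hY hYunif X hX n hn
end
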